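/- arXiv:2012.12984 — 5 statements merged into one kernel-verified Lean document; each statement's English description precedes it below -/
import Mathlib

section
/- Let γ : [a,b] → X be an injective Lipschitz curve into a metric space X. Then the 1-dimensional Hausdorff measure of the image equals the integral of the metric speed: H¹(γ([c,d])) = ∫_c^d |γ̇|(t) dt for every [c,d] ⊆ [a,b], where |γ̇|(t) = lim_{h→0} d(γ(t+h), γ(t))/|h| (which exists a.e.). -/
open MeasureTheory Filter Set Topology Metric
open scoped ENNReal NNReal

/-!
Both sides equal the length `eVariationOn γ (Icc c d)` of the curve.

For the integral this is the fundamental theorem of calculus for absolutely continuous functions: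
the derivative of the Lipschitz function `u ↦ d(γ u, γ s)` is bounded by `|γ̇|`, so
`d(γ s, γ t) ≤ ∫ₛᵗ |γ̇|`, and summing over a partition bounds the length from above. The
arc-length function `V` is monotone with `V' ≥ |γ̇|`, which bounds the length from below.

For the Hausdorff measure, the arc-length reparametrisation is 1-Lipschitz, so `H¹(γ([c,d]))` is at
most the length. Conversely, by injectivity the images of the pieces of a partition of `[c,d]`
meet only in single points, and each image, being connected, has `H¹` at least the distance
between its endpoints.
-/

/-- `ℓ = |γ̇|(t)`, the metric derivative of `γ` at `t`. -/
def HasMetricDerivAt {X : Type*} [PseudoMetricSpace X] (γ : ℝ → X) (ℓ t : ℝ) : Prop :=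
  Tendsto (fun h : ℝ => dist (γ (t + h)) (γ t) / |h|) (𝓝[≠] 0) (𝓝 ℓ)

namespace HasMetricDerivAt

variable {X : Type*} [PseudoMetricSpace X] {γ : ℝ → X} {ℓ t : ℝ} {f : ℝ → ℝ}

theorem nonneg (hγ : HasMetricDerivAt γ ℓ t) : 0 ≤ ℓ :=
  ge_of_tendsto hγ (Eventually.of_forall fun h => by positivity)

theorem tendsto_nhdsGT (hγ : HasMetricDerivAt γ ℓ t) :
    Tendsto (fun h : ℝ => (dist (γ (t + h)) (γ t)) / h) (𝓝[>] 0) (𝓝 ℓ) :=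
  (hγ.mono_left (nhdsGT_le_nhdsNE 0)).congr' <| eventually_nhdsWithin_of_forall
    fun h (hh : 0 < h) => by rw [abs_of_pos hh]

theorem abs_deriv_le (hγ : HasMetricDerivAt γ ℓ t) (hf : DifferentiableAt ℝ f t)
    (hfγ : ∀ h, |f (t + h) - f t| ≤ dist (γ (t + h)) (γ t)) : |deriv f t| ≤ ℓ := by
  refine le_of_tendsto_of_tendsto hf.hasDerivAt.tendsto_slope_zero_right.abs
    hγ.tendsto_nhdsGT <| eventually_nhdsWithin_of_forall fun h (hh : 0 < h) => ?_
  simp only [smul_eq_mul]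
  rw [abs_mul, abs_inv, abs_of_pos hh, inv_mul_eq_div]
  exact div_le_div_of_nonneg_right (hfγ h) hh.le

theorem le_deriv (hγ : HasMetricDerivAt γ ℓ t) (hf : DifferentiableAt ℝ f t)
    (hfγ : ∀ᶠ h in 𝓝[>] 0, dist (γ (t + h)) (γ t) ≤ f (t + h) - f t) : ℓ ≤ deriv f t := by
  refine le_of_tendsto_of_tendsto hγ.tendsto_nhdsGT hf.hasDerivAt.tendsto_slope_zero_right <|
    (hfγ.and self_mem_nhdsWithin).mono fun h ⟨hle, (hh : 0 < h)⟩ => ?_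
  simp only [smul_eq_mul]
  rw [inv_mul_eq_div]
  exact div_le_div_of_nonneg_right hle hh.le

end HasMetricDerivAt

theorem eVariationOn_Icc_le_of_edist_le {E : Type*} [PseudoEMetricSpace E] {f : ℝ → E}
    {m : ℝ → ℝ → ℝ≥0∞} {a b : ℝ}
    (hm : ∀ s t u, a ≤ s → s ≤ t → t ≤ u → u ≤ b → m s t + m t u ≤ m s u)
    (hf : ∀ s t, a ≤ s → s ≤ t → t ≤ b → edist (f s) (f t) ≤ m s t) :
    eVariationOn f (Icc a b) ≤ m a b := by
  refine iSup_le fun ⟨n, u, hu, us⟩ => ?_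
  have telescope :
      ∀ k, ∑ i ∈ Finset.range k, edist (f (u (i + 1))) (f (u i)) ≤ m (u 0) (u k) := by
    intro k
    induction k with
    | zero => simp
    | succ k ih =>
      rw [Finset.sum_range_succ, edist_comm]
      exact (add_le_add ih (hf _ _ (us k).1 (hu k.le_succ) (us (k + 1)).2)).trans
        (hm _ _ _ (us 0).1 (hu k.zero_le) (hu k.le_succ) (us (k + 1)).2)
  calc ∑ i ∈ Finset.range n, edist (f (u (i + 1))) (f (u i))
      ≤ m (u 0) (u n) := telescope n
    _ ≤ m a (u 0) + m (u 0) (u n) := le_add_self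
    _ ≤ m a (u n) := hm _ _ _ le_rfl (us 0).1 (hu n.zero_le) (us n).2
    _ ≤ m a (u n) + m (u n) b := le_self_add
    _ ≤ m a b := hm _ _ _ le_rfl (us n).1 (us n).2 le_rfl

theorem measure_image_Icc_add_measure_image_Icc {Y : Type*} [TopologicalSpace Y] [T2Space Y]
    [MeasurableSpace Y] [OpensMeasurableSpace Y] {μ : Measure Y} [NullSingletonClass μ]
    {F : ℝ → Y} {s t u : ℝ} (hF : ContinuousOn F (Icc s u)) (hFinj : InjOn F (Icc s u))
    (hst : s ≤ t) (htu : t ≤ u) :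
    μ (F '' Icc s t) + μ (F '' Icc t u) = μ (F '' Icc s u) := by
  have hsub₁ : Icc s t ⊆ Icc s u := Icc_subset_Icc_right htu
  have hsub₂ : Icc t u ⊆ Icc s u := Icc_subset_Icc_left hst
  have hnull : μ (F '' Icc s t ∩ F '' Icc t u) = 0 := by
    rw [← hFinj.image_inter hsub₁ hsub₂, Icc_inter_Icc_eq_singleton hst htu, image_singleton]
    exact measure_singleton _
  have hmeas : MeasurableSet (F '' Icc t u) :=
    (isCompact_Icc.image_of_continuousOn (hF.mono hsub₂)).isClosed.measurableSet
  rw [← measure_union₀ hmeas.nullMeasurableSet hnull, ← image_union,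
    Icc_union_Icc_eq_Icc hst htu]

theorem IsPreconnected.edist_le_hausdorffMeasure {X : Type*} [MetricSpace X]
    [MeasurableSpace X] [BorelSpace X] {S : Set X} (hS : IsPreconnected S) {x y : X}
    (hx : x ∈ S) (hy : y ∈ S) : edist x y ≤ μH[1] S := by
  have hIcc : Icc 0 (dist y x) ⊆ (dist · x) '' S := by
    simpa using (hS.image _ (continuous_id.dist continuous_const).continuousOn).Icc_subset
      (mem_image_of_mem (dist · x) hx) (mem_image_of_mem (dist · x) hy)
  calc edist x y = volume (Icc 0 (dist y x)) := by
        rw [Real.volume_Icc, sub_zero, edist_dist, dist_comm]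
    _ ≤ μH[1] ((dist · x) '' S) := by rw [← hausdorffMeasure_real]; exact measure_mono hIcc
    _ ≤ μH[1] S := by
        simpa using (LipschitzWith.dist_left x).hausdorffMeasure_image_le zero_le_one S

theorem eVariationOn_le_hausdorffMeasure_image {X : Type*} [MetricSpace X]
    [MeasurableSpace X] [BorelSpace X] {γ : ℝ → X} {a b : ℝ} (hγ : ContinuousOn γ (Icc a b))
    (hinj : InjOn γ (Icc a b)) : eVariationOn γ (Icc a b) ≤ μH[1] (γ '' Icc a b) := by
  have := Measure.nullSingletonClass_hausdorff X one_pos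
  refine eVariationOn_Icc_le_of_edist_le (m := fun s t => μH[1] (γ '' Icc s t))
    (fun s t u has hst htu hub => ?_) fun s t has hst htb => ?_
  · have hsub : Icc s u ⊆ Icc a b := Icc_subset_Icc has hub
    exact (measure_image_Icc_add_measure_image_Icc (hγ.mono hsub) (hinj.mono hsub) hst htu).le
  · exact IsPreconnected.edist_le_hausdorffMeasure
      (isPreconnected_Icc.image γ (hγ.mono (Icc_subset_Icc has htb)))
      (mem_image_of_mem γ (left_mem_Icc.2 hst)) (mem_image_of_mem γ (right_mem_Icc.2 hst))

theorem HasConstantSpeedOnWith.lipschitzOnWith {E : Type*} [PseudoEMetricSpace E] {f : ℝ → E}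
    {s : Set ℝ} {l : ℝ≥0} (hf : HasConstantSpeedOnWith f s l) : LipschitzOnWith l f s := by
  intro x hx y hy
  wlog hxy : x ≤ y generalizing x y
  · rw [edist_comm, edist_comm x]
    exact this hy hx (le_of_not_ge hxy)
  calc edist (f x) (f y) ≤ eVariationOn f (s ∩ Icc x y) :=
        eVariationOn.edist_le f ⟨hx, le_rfl, hxy⟩ ⟨hy, hxy, le_rfl⟩
    _ = ENNReal.ofReal (l * (y - x)) := hf hx hy
    _ = l * edist x y := by
        rw [edist_dist, Real.dist_eq, abs_sub_comm, abs_of_nonneg (sub_nonneg.2 hxy),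
          ENNReal.ofReal_mul l.coe_nonneg, ENNReal.ofReal_coe_nnreal]

theorem hausdorffMeasure_image_le_eVariationOn {X : Type*} [MetricSpace X] [MeasurableSpace X]
    [BorelSpace X] (γ : ℝ → X) (s : Set ℝ) : μH[1] (γ '' s) ≤ eVariationOn γ s := by
  rcases eq_top_or_lt_top (eVariationOn γ s) with htop | hfin
  · simp [htop]
  rcases s.eq_empty_or_nonempty with rfl | ⟨a, ha⟩
  · simp
  have hγ : BoundedVariationOn γ s := hfin.ne
  set φ := variationOnFromTo γ s a
  have himage : γ '' s = naturalParameterization γ s a '' (φ '' s) := by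
    rw [image_image]
    exact image_congr fun b hb => (edist_eq_zero.1
      (edist_naturalParameterization_eq_zero hγ.locallyBoundedVariationOn ha hb)).symm
  have hdiam : ediam (φ '' s) ≤ eVariationOn γ s := by
    refine ediam_le ?_
    rintro _ ⟨x, hx, rfl⟩ _ ⟨y, hy, rfl⟩
    rw [edist_dist, Real.dist_eq, variationOnFromTo.sub_right hγ.locallyBoundedVariationOn ha hx hy,
      ← ENNReal.ofReal_toReal hγ]
    exact ENNReal.ofReal_le_ofReal (variationOnFromTo.abs_le_eVariationOn hγ)
  calc μH[1] (γ '' s) ≤ (1 : ℝ≥0) ^ (1 : ℝ) * μH[1] (φ '' s) := by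
        rw [himage]
        exact (has_unit_speed_naturalParameterization γ hγ.locallyBoundedVariationOn
          ha).lipschitzOnWith.hausdorffMeasure_image_le zero_le_one
    _ = volume (φ '' s) := by rw [hausdorffMeasure_real]; simp
    _ ≤ ediam (φ '' s) := Real.volume_le_diam _
    _ ≤ eVariationOn γ s := hdiam

theorem hausdorffMeasure_image_Icc_eq_eVariationOn {X : Type*} [MetricSpace X]
    [MeasurableSpace X] [BorelSpace X] {γ : ℝ → X} {a b : ℝ} (hγ : ContinuousOn γ (Icc a b))
    (hinj : InjOn γ (Icc a b)) : μH[1] (γ '' Icc a b) = eVariationOn γ (Icc a b) :=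
  le_antisymm (hausdorffMeasure_image_le_eVariationOn γ _)
    (eVariationOn_le_hausdorffMeasure_image hγ hinj)

section MetricDerivative

variable {X : Type*} [PseudoMetricSpace X] {γ : ℝ → X} {v : ℝ → ℝ} {a b : ℝ}

theorem edist_le_lintegral_of_hasMetricDerivAt {L : ℝ≥0} (hab : a ≤ b)
    (hγ : LipschitzOnWith L γ (Icc a b))
    (hv : ∀ᵐ t ∂volume.restrict (Icc a b), HasMetricDerivAt γ (v t) t) :
    edist (γ a) (γ b) ≤ ∫⁻ t in Icc a b, ENNReal.ofReal (v t) := by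
  set f : ℝ → ℝ := fun u => dist (γ u) (γ a)
  have hf : AbsolutelyContinuousOnInterval f a b := by
    refine LipschitzOnWith.absolutelyContinuousOnInterval (K := L) ?_
    rw [uIcc_of_le hab]
    simpa [f, Function.comp_def] using (LipschitzWith.dist_left (γ a)).comp_lipschitzOnWith hγ
  have hdiff := hf.ae_differentiableAt
  rw [uIcc_of_le hab, ← ae_restrict_iff' measurableSet_Icc] at hdiff
  have hderiv : ∀ᵐ t ∂volume.restrict (Icc a b), ‖deriv f t‖ₑ ≤ ENNReal.ofReal (v t) := by
    filter_upwards [hv, hdiff] with t hvt hft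
    rw [Real.enorm_eq_ofReal_abs]
    exact ENNReal.ofReal_le_ofReal (hvt.abs_deriv_le hft fun h => abs_dist_sub_le _ _ _)
  calc edist (γ a) (γ b) = ‖∫ t in a..b, deriv f t‖ₑ := by
        rw [hf.integral_deriv_eq_sub, Real.enorm_eq_ofReal_abs, edist_dist]
        simp [f, dist_comm]
    _ ≤ ∫⁻ t in Ioc a b, ‖deriv f t‖ₑ := by
        rw [intervalIntegral.integral_of_le hab]
        exact enorm_integral_le_lintegral_enorm _
    _ = ∫⁻ t in Icc a b, ‖deriv f t‖ₑ := setLIntegral_congr Ioc_ae_eq_Icc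
    _ ≤ ∫⁻ t in Icc a b, ENNReal.ofReal (v t) := lintegral_mono_ae hderiv

theorem eVariationOn_le_lintegral_of_hasMetricDerivAt {L : ℝ≥0}
    (hγ : LipschitzOnWith L γ (Icc a b))
    (hv : ∀ᵐ t ∂volume.restrict (Icc a b), HasMetricDerivAt γ (v t) t) :
    eVariationOn γ (Icc a b) ≤ ∫⁻ t in Icc a b, ENNReal.ofReal (v t) := by
  refine eVariationOn_Icc_le_of_edist_le (m := fun s t => ∫⁻ t in Icc s t, ENNReal.ofReal (v t))
    (fun s t u _ hst htu _ => ?_) fun s t has hst htb => ?_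
  · have := measure_image_Icc_add_measure_image_Icc continuousOn_id (injOn_id _) hst htu
      (μ := volume.withDensity fun t => ENNReal.ofReal (v t))
    simp only [image_id, withDensity_apply _ measurableSet_Icc] at this
    exact this.le
  · have hsub : Icc s t ⊆ Icc a b := Icc_subset_Icc has htb
    exact edist_le_lintegral_of_hasMetricDerivAt hst (hγ.mono hsub)
      (ae_restrict_of_ae_restrict_of_subset hsub hv)

theorem lintegral_le_eVariationOn_of_hasMetricDerivAt
    (hv : ∀ᵐ t ∂volume.restrict (Icc a b), HasMetricDerivAt γ (v t) t) :
    ∫⁻ t in Icc a b, ENNReal.ofReal (v t) ≤ eVariationOn γ (Icc a b) := by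
  rcases lt_or_ge b a with hba | hab
  · simp [Icc_eq_empty_of_lt hba]
  rcases eq_top_or_lt_top (eVariationOn γ (Icc a b)) with htop | hfin
  · simp [htop]
  have hγ : LocallyBoundedVariationOn γ (Icc a b) :=
    BoundedVariationOn.locallyBoundedVariationOn hfin.ne
  have ha : a ∈ Icc a b := left_mem_Icc.2 hab
  set V := variationOnFromTo γ (Icc a b) a
  have hV : MonotoneOn V (Icc a b) := variationOnFromTo.monotoneOn hγ ha
  have hdist : ∀ t ∈ Icc a b, ∀ u ∈ Icc a b, t ≤ u → dist (γ u) (γ t) ≤ V u - V t := by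
    intro t ht u hu htu
    rw [variationOnFromTo.sub_right hγ ha hu ht, variationOnFromTo.eq_of_le _ _ htu, dist_comm,
      dist_edist]
    exact ENNReal.toReal_mono (hγ t u ht hu)
      (eVariationOn.edist_le γ ⟨ht, le_rfl, htu⟩ ⟨hu, htu, le_rfl⟩)
  have hvIoo := ae_restrict_of_ae_restrict_of_subset Ioo_subset_Icc_self hv
  have hdiff := hV.ae_differentiableWithinAt_of_mem
  rw [← ae_restrict_iff' measurableSet_Icc] at hdiff
  have hderiv : ∀ᵐ t ∂volume.restrict (Ioo a b), v t ≤ deriv V t := by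
    filter_upwards [hvIoo, ae_restrict_of_ae_restrict_of_subset Ioo_subset_Icc_self hdiff,
      ae_restrict_mem measurableSet_Ioo] with t hvt hVt ht
    refine hvt.le_deriv (hVt.differentiableAt (Icc_mem_nhds ht.1 ht.2)) ?_
    filter_upwards [Ioo_mem_nhdsGT (sub_pos.2 ht.2)] with h hh
    exact hdist t (Ioo_subset_Icc_self ht) (t + h)
      ⟨by linarith [hh.1, ht.1], by linarith [hh.2]⟩ (by linarith [hh.1])
  have hnonneg : 0 ≤ᵐ[volume.restrict (Ioo a b)] deriv V := by
    filter_upwards [hvIoo, hderiv] with t hvt ht using hvt.nonneg.trans ht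
  have hVuIcc : MonotoneOn V (uIcc a b) := hV.mono (uIcc_of_le hab).subset
  have hint : IntegrableOn (deriv V) (Ioo a b) :=
    (intervalIntegrable_iff_integrableOn_Ioo_of_le hab).1 hVuIcc.intervalIntegrable_deriv
  calc ∫⁻ t in Icc a b, ENNReal.ofReal (v t) = ∫⁻ t in Ioo a b, ENNReal.ofReal (v t) :=
        setLIntegral_congr Ioo_ae_eq_Icc.symm
    _ ≤ ∫⁻ t in Ioo a b, ENNReal.ofReal (deriv V t) :=
        lintegral_mono_ae (hderiv.mono fun t ht => ENNReal.ofReal_le_ofReal ht)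
    _ = ENNReal.ofReal (∫ t in a..b, deriv V t) := by
        rw [intervalIntegral.integral_of_le hab, integral_Ioc_eq_integral_Ioo,
          ofReal_integral_eq_lintegral_ofReal hint hnonneg]
    _ ≤ ENNReal.ofReal (V b - V a) :=
        ENNReal.ofReal_le_ofReal <| hVuIcc.intervalIntegral_deriv_mem_uIcc.2.trans_eq
          (max_eq_right (sub_nonneg.2 (hV ha (right_mem_Icc.2 hab) hab)))
    _ = eVariationOn γ (Icc a b) := by
        simp only [V]
        rw [variationOnFromTo.self, sub_zero, variationOnFromTo.eq_of_le _ _ hab, inter_self,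
          ENNReal.ofReal_toReal hfin.ne]

theorem eVariationOn_eq_lintegral_of_hasMetricDerivAt {L : ℝ≥0}
    (hγ : LipschitzOnWith L γ (Icc a b))
    (hv : ∀ᵐ t ∂volume.restrict (Icc a b), HasMetricDerivAt γ (v t) t) :
    eVariationOn γ (Icc a b) = ∫⁻ t in Icc a b, ENNReal.ofReal (v t) :=
  le_antisymm (eVariationOn_le_lintegral_of_hasMetricDerivAt hγ hv)
    (lintegral_le_eVariationOn_of_hasMetricDerivAt hv)

end MetricDerivative

theorem stmt13_general {X : Type*} [MetricSpace X] [MeasurableSpace X] [BorelSpace X]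
    (a b : ℝ) (γ : ℝ → X) (L : NNReal)
    (hlip : LipschitzOnWith L γ (Set.Icc a b))
    (hinj : Set.InjOn γ (Set.Icc a b))
    (v : ℝ → ℝ)
    (hv : ∀ᵐ t ∂(volume.restrict (Set.Icc a b)),
      Tendsto (fun h : ℝ => dist (γ (t + h)) (γ t) / |h|) (nhdsWithin 0 {0}ᶜ) (nhds (v t)))
    (c d : ℝ) (hc : a ≤ c) (hd : d ≤ b) :
    μH[1] (γ '' Set.Icc c d) = ∫⁻ t in Set.Icc c d, ENNReal.ofReal (v t) := by
  have hsub : Icc c d ⊆ Icc a b := Icc_subset_Icc hc hd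
  rw [hausdorffMeasure_image_Icc_eq_eVariationOn (hlip.mono hsub).continuousOn (hinj.mono hsub)]
  exact eVariationOn_eq_lintegral_of_hasMetricDerivAt (hlip.mono hsub)
    (ae_restrict_of_ae_restrict_of_subset hsub hv)

/-- For an injective Lipschitz curve `γ : [a,b] → X` into a metric space, the
1-dimensional Hausdorff measure of `γ([c,d])` equals the integral of the metric
speed `|γ̇|(t) = lim_{h→0} d(γ(t+h),γ(t))/|h|` (which exists a.e.). -/
theorem stmt13 {X : Type*} [MetricSpace X] [MeasurableSpace X] [BorelSpace X]
    (a b : ℝ) (hab : a ≤ b) (γ : ℝ → X) (L : NNReal)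
    (hlip : LipschitzOnWith L γ (Set.Icc a b))
    (hinj : Set.InjOn γ (Set.Icc a b))
    (v : ℝ → ℝ) (hvmeas : Measurable v) (hv0 : ∀ t, 0 ≤ v t)
    (hv : ∀ᵐ t ∂(volume.restrict (Set.Icc a b)),
      Tendsto (fun h : ℝ => dist (γ (t + h)) (γ t) / |h|) (nhdsWithin 0 {0}ᶜ) (nhds (v t)))
    (c d : ℝ) (hc : a ≤ c) (hcd : c ≤ d) (hd : d ≤ b) :
    μH[1] (γ '' Set.Icc c d) = ∫⁻ t in Set.Icc c d, ENNReal.ofReal (v t) :=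
  stmt13_general a b γ L hlip hinj v hv c d hc hd
end

section
/- Let X = Y* with Y separable and γ : [a,b] → X be C¹_{w*} with inf_{[a,b]} ‖γ'‖ > 0. Then Γ = γ([a,b]) is 1-Ahlfors regular: there is C ≥ 1 with C⁻¹ r ≤ H¹(Γ ∩ B(x,r)) ≤ Cr for all x ∈ Γ and 0 < r ≤ diam(Γ). -/
/-!
Applying the mean value inequality to the real functions `t ↦ γ t y`, `‖y‖ ≤ 1`, shows that `γ`
is `M`-Lipschitz, `M = sup ‖γ'‖`. Testing against a functional `y` that almost norms `γ' t₁`, and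
using the uniform continuity of `γ'`, gives `(m/2)|t - t'| ≤ ‖γ t - γ t'‖` whenever
`|t - t'| < δ`. For the lower bound, a parameter interval of length `s ≈ min (r/M) δ` around the
centre is mapped into the ball onto a connected set whose endpoints are `(m/2) s` apart, and a
connected set has `H¹` at least the distance of any two of its points. For the upper bound,
`[a, b]` is cut into `≈ (b - a)/δ` intervals of length `δ/2`; on each, the preimage of the ball
has length `≤ 4r/m`, and the Lipschitz bound transfers length to `H¹`.
-/

open MeasureTheory Metric NormedSpace
open Set
open scoped ENNReal NNReal

theorem ofReal_dist_le_hausdorffMeasure_one {X : Type*} [MetricSpace X] [MeasurableSpace X]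
    [BorelSpace X] {E : Set X} (hE : IsPreconnected E) {x y : X} (hx : x ∈ E) (hy : y ∈ E) :
    ENNReal.ofReal (dist x y) ≤ μH[1] E := by
  have hf : LipschitzWith 1 (fun z => dist z x) := LipschitzWith.dist_left x
  have hI : Icc 0 (dist y x) ⊆ (fun z => dist z x) '' E :=
    (hE.image _ hf.continuous.continuousOn).Icc_subset ⟨x, hx, dist_self x⟩ ⟨y, hy, rfl⟩
  calc ENNReal.ofReal (dist x y) = volume (Icc 0 (dist y x)) := by
        rw [Real.volume_Icc, sub_zero, dist_comm]
    _ ≤ μH[1] ((fun z => dist z x) '' E) := by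
        rw [hausdorffMeasure_real]; exact measure_mono hI
    _ ≤ μH[1] E := by simpa using hf.hausdorffMeasure_image_le zero_le_one E

theorem mem_Icc_floor_div {a h t : ℝ} (hh : 0 < h) (ht : a ≤ t) :
    t ∈ Icc (a + ⌊(t - a) / h⌋₊ * h) (a + ⌊(t - a) / h⌋₊ * h + h) := by
  have hle := Nat.floor_le (div_nonneg (sub_nonneg.2 ht) hh.le)
  have hlt := Nat.lt_floor_add_one ((t - a) / h)
  rw [le_div_iff₀ hh] at hle
  rw [div_lt_iff₀ hh] at hlt
  constructor <;> nlinarith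

theorem volume_le_of_forall_abs_sub_le {S : Set ℝ} {a b h d : ℝ} (hh : 0 < h)
    (hS : S ⊆ Icc a b) (hd : ∀ t ∈ S, ∀ t' ∈ S, |t - t'| ≤ h → |t - t'| ≤ d) :
    volume S ≤ (⌊(b - a) / h⌋₊ + 1 : ℕ) * ENNReal.ofReal d := by
  set piece : ℕ → Set ℝ := fun j => S ∩ Icc (a + j * h) (a + j * h + h)
  have hcover : S ⊆ ⋃ j ∈ Finset.range (⌊(b - a) / h⌋₊ + 1), piece j := by
    intro t ht
    have hj : ⌊(t - a) / h⌋₊ < ⌊(b - a) / h⌋₊ + 1 :=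
      Nat.lt_succ_of_le (Nat.floor_le_floor (by gcongr; exact (hS ht).2))
    exact mem_biUnion (Finset.mem_range.2 hj) ⟨ht, mem_Icc_floor_div hh (hS ht).1⟩
  have hpiece : ∀ j, volume (piece j) ≤ ENNReal.ofReal d := fun j =>
    (Real.volume_le_diam _).trans <| Metric.ediam_le fun t ht t' ht' => by
      rw [edist_dist, Real.dist_eq]
      refine ENNReal.ofReal_le_ofReal (hd t ht.1 t' ht'.1 ?_)
      rw [abs_le]
      constructor <;> linarith [ht.2.1, ht.2.2, ht'.2.1, ht'.2.2]
  calc volume S ≤ ∑ j ∈ Finset.range (⌊(b - a) / h⌋₊ + 1), volume (piece j) :=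
        (measure_mono hcover).trans (measure_biUnion_finset_le _ _)
    _ ≤ ∑ _j ∈ Finset.range (⌊(b - a) / h⌋₊ + 1), ENNReal.ofReal d :=
        Finset.sum_le_sum fun j _ => hpiece j
    _ = _ := by rw [Finset.sum_const, Finset.card_range, nsmul_eq_mul]

theorem exists_Icc_add_subset_Icc_of_mem {a b s t₀ : ℝ} (ht₀ : t₀ ∈ Icc a b) (hs₀ : 0 ≤ s)
    (hs : s ≤ b - a) :
    ∃ u, Icc u (u + s) ⊆ Icc a b ∧ t₀ ∈ Icc u (u + s) := by
  refine ⟨min t₀ (b - s), Icc_subset_Icc ?_ ?_, min_le_left _ _, ?_⟩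
  · exact le_min ht₀.1 (by linarith)
  · linarith [min_le_right t₀ (b - s)]
  · have : t₀ - s ≤ min t₀ (b - s) := le_min (by linarith) (by linarith [ht₀.2])
    linarith

theorem LipschitzOnWith.diam_image_Icc_le {X : Type*} [PseudoMetricSpace X] {f : ℝ → X}
    {L : ℝ≥0} {a b : ℝ} (hf : LipschitzOnWith L f (Icc a b)) (hab : a ≤ b) :
    diam (f '' Icc a b) ≤ L * (b - a) := by
  refine diam_le_of_forall_dist_le (by have := sub_nonneg.2 hab; positivity) ?_
  rintro _ ⟨t, ht, rfl⟩ _ ⟨t', ht', rfl⟩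
  exact (hf.dist_le_mul t ht t' ht').trans (by gcongr; exact Real.dist_le_of_mem_Icc ht ht')

section LocallyBiLipschitz

variable {X : Type*} [MetricSpace X] [MeasurableSpace X] [BorelSpace X] {f : ℝ → X}
  {L : ℝ≥0} {a b c δ : ℝ}

theorem LipschitzOnWith.hausdorffMeasure_image_Icc_inter_ball_le
    (hf : LipschitzOnWith L f (Icc a b)) (hc : 0 < c) (hδ : 0 < δ)
    (hanti : ∀ t ∈ Icc a b, ∀ t' ∈ Icc a b, |t - t'| < δ → c * |t - t'| ≤ dist (f t) (f t'))
    (x : X) (r : ℝ) :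
    μH[1] (f '' Icc a b ∩ ball x r) ≤
      ENNReal.ofReal (L * (⌊(b - a) / (δ / 2)⌋₊ + 1 : ℕ) * (2 * r / c)) := by
  set S := Icc a b ∩ f ⁻¹' ball x r
  have hS : volume S ≤ (⌊(b - a) / (δ / 2)⌋₊ + 1 : ℕ) * ENNReal.ofReal (2 * r / c) := by
    refine volume_le_of_forall_abs_sub_le (half_pos hδ) inter_subset_left
      fun t ht t' ht' hclose => ?_
    have hdist : dist (f t) (f t') < 2 * r := by
      linarith [dist_triangle_right (f t) (f t') x, mem_ball.1 ht.2, mem_ball.1 ht'.2]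
    rw [le_div_iff₀ hc, mul_comm]
    exact (hanti t ht.1 t' ht'.1 (by linarith)).trans hdist.le
  calc μH[1] (f '' Icc a b ∩ ball x r) = μH[1] (f '' S) := by rw [image_inter_preimage]
    _ ≤ (L : ℝ≥0∞) ^ (1 : ℝ) * μH[1] S :=
        (hf.mono inter_subset_left).hausdorffMeasure_image_le zero_le_one
    _ ≤ L * ((⌊(b - a) / (δ / 2)⌋₊ + 1 : ℕ) * ENNReal.ofReal (2 * r / c)) := by
        rw [ENNReal.rpow_one, hausdorffMeasure_real]; gcongr
    _ = _ := by
        rw [ENNReal.ofReal_mul (by positivity), ENNReal.ofReal_mul (by positivity),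
          ENNReal.ofReal_coe_nnreal, ENNReal.ofReal_natCast, mul_assoc]

theorem LipschitzOnWith.ofReal_mul_le_hausdorffMeasure_image_Icc_inter_ball
    (hf : LipschitzOnWith L f (Icc a b))
    (hanti : ∀ t ∈ Icc a b, ∀ t' ∈ Icc a b, |t - t'| < δ → c * |t - t'| ≤ dist (f t) (f t'))
    {t₀ s r : ℝ} (ht₀ : t₀ ∈ Icc a b) (hs : 0 ≤ s) (hsba : s ≤ b - a) (hsδ : s < δ)
    (hsr : L * s < r) :
    ENNReal.ofReal (c * s) ≤ μH[1] (f '' Icc a b ∩ ball (f t₀) r) := by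
  obtain ⟨u, hJ, ht₀J⟩ := exists_Icc_add_subset_Icc_of_mem ht₀ hs hsba
  have hu : u ≤ u + s := le_add_of_nonneg_right hs
  have hsub : f '' Icc u (u + s) ⊆ f '' Icc a b ∩ ball (f t₀) r := by
    rintro _ ⟨t, ht, rfl⟩
    refine ⟨mem_image_of_mem f (hJ ht), ?_⟩
    calc dist (f t) (f t₀) ≤ L * dist t t₀ := hf.dist_le_mul t (hJ ht) t₀ (hJ ht₀J)
      _ ≤ L * s := by gcongr; simpa using Real.dist_le_of_mem_Icc ht ht₀J
      _ < r := hsr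
  have habs : |u - (u + s)| = s := by rw [sub_add_cancel_left, abs_neg, abs_of_nonneg hs]
  calc ENNReal.ofReal (c * s) ≤ ENNReal.ofReal (dist (f u) (f (u + s))) := by
        gcongr
        have := hanti u (hJ (left_mem_Icc.2 hu)) (u + s) (hJ (right_mem_Icc.2 hu)) (by rwa [habs])
        rwa [habs] at this
    _ ≤ μH[1] (f '' Icc u (u + s)) :=
        ofReal_dist_le_hausdorffMeasure_one (isPreconnected_Icc.image f (hf.continuousOn.mono hJ))
          (mem_image_of_mem f (left_mem_Icc.2 hu)) (mem_image_of_mem f (right_mem_Icc.2 hu))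
    _ ≤ _ := measure_mono hsub

theorem LipschitzOnWith.ahlfors_regular_image_Icc (hf : LipschitzOnWith L f (Icc a b))
    (hc : 0 < c) (hδ : 0 < δ)
    (hanti : ∀ t ∈ Icc a b, ∀ t' ∈ Icc a b, |t - t'| < δ → c * |t - t'| ≤ dist (f t) (f t')) :
    ∃ C : ℝ, 1 ≤ C ∧ ∀ x ∈ f '' Icc a b, ∀ r : ℝ, 0 < r → r ≤ diam (f '' Icc a b) →
      ENNReal.ofReal (r / C) ≤ μH[1] (f '' Icc a b ∩ ball x r) ∧
      μH[1] (f '' Icc a b ∩ ball x r) ≤ ENNReal.ofReal (C * r) := by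
  set N : ℕ := ⌊(b - a) / (δ / 2)⌋₊ + 1
  -- `N > 2 (b - a) / δ`, so `K` also dominates the lower-bound constant `2 L (b - a) / (c δ)`
  set K : ℝ := 2 * L * N / c
  refine ⟨max 1 K, le_max_left _ _, ?_⟩
  rintro _ ⟨t₀, ht₀, rfl⟩ r hr hrdiam
  have hba : 0 ≤ b - a := by linarith [ht₀.1, ht₀.2]
  have hrL : r ≤ L * (b - a) := hrdiam.trans (hf.diam_image_Icc_le (by linarith))
  have hL : 0 < (L : ℝ) := pos_of_mul_pos_left (hr.trans_le hrL) hba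
  have hN : (b - a) / (δ / 2) < N := by
    simp only [N, Nat.cast_add, Nat.cast_one]; exact Nat.lt_floor_add_one _
  have hN1 : (1 : ℝ) ≤ N := by exact_mod_cast Nat.le_add_left 1 _
  have hK : 0 < K := by positivity
  have hcK : c * K = 2 * L * N := mul_div_cancel₀ _ hc.ne'
  constructor
  · set s := min (r / (2 * L)) (δ / 2)
    have hLs : L * s ≤ r / 2 := calc
      L * s ≤ L * (r / (2 * L)) := by gcongr; exact min_le_left _ _
      _ = r / 2 := by field_simp
    have hsba : s ≤ b - a := (min_le_left _ _).trans <| by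
      rw [div_le_iff₀ (by positivity)]; nlinarith
    refine le_trans ?_ (hf.ofReal_mul_le_hausdorffMeasure_image_Icc_inter_ball hanti ht₀
      (le_min (by positivity) (by positivity)) hsba
      ((min_le_right _ _).trans_lt (half_lt_self hδ)) (by linarith))
    gcongr
    calc r / max 1 K ≤ r / K := by gcongr; exact le_max_right _ _
      _ ≤ c * s := by
        rw [div_le_iff₀ hK, mul_min_of_nonneg _ _ hc.le, min_mul_of_nonneg _ _ hK.le]
        refine le_min ?_ ?_
        · have : c * (r / (2 * L)) * K = r * N := by rw [mul_right_comm, hcK]; field_simp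
          rw [this]; nlinarith
        · have : c * (δ / 2) * K = L * (N * δ) := by rw [mul_right_comm, hcK]; ring
          rw [div_lt_iff₀ (half_pos hδ)] at hN
          rw [this]; nlinarith
  · refine (hf.hausdorffMeasure_image_Icc_inter_ball_le hc hδ hanti _ r).trans
      (ENNReal.ofReal_le_ofReal ?_)
    calc L * N * (2 * r / c) = K * r := by
          rw [← mul_div_cancel_left₀ (K * r) hc.ne', ← mul_assoc, hcK]; ring
      _ ≤ max 1 K * r := by gcongr; exact le_max_right _ _

end LocallyBiLipschitz

section OperatorValuedCurve

variable {E F : Type*} [NormedAddCommGroup E] [NormedSpace ℝ E] [NormedAddCommGroup F]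
  [NormedSpace ℝ F] {γ γ' : ℝ → E →L[ℝ] F}

theorem lipschitzOnWith_of_hasDerivWithinAt_apply {s : Set ℝ} {C : ℝ≥0} (hs : Convex ℝ s)
    (hderiv : ∀ t ∈ s, ∀ y, HasDerivWithinAt (fun u => γ u y) (γ' t y) s t)
    (hbound : ∀ t ∈ s, ‖γ' t‖ ≤ C) : LipschitzOnWith C γ s := by
  refine LipschitzOnWith.of_dist_le_mul fun t ht t' ht' => ?_
  rw [dist_eq_norm]
  refine ContinuousLinearMap.opNorm_le_bound _ (by positivity) fun y => ?_
  have := hs.norm_image_sub_le_of_norm_hasDerivWithin_le (fun u hu => hderiv u hu y)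
    (fun u hu => (γ' u).le_of_opNorm_le (hbound u hu) y) ht' ht
  rwa [sub_apply, Real.dist_eq, ← Real.norm_eq_abs, mul_right_comm]

theorem mul_sub_le_norm_sub_of_hasDerivWithinAt_apply {t₁ t₂ ε : ℝ} (hε : 0 < ε)
    (hle : t₁ ≤ t₂)
    (hderiv : ∀ t ∈ Icc t₁ t₂, ∀ y, HasDerivWithinAt (fun u => γ u y) (γ' t y) (Icc t₁ t₂) t)
    (hclose : ∀ t ∈ Icc t₁ t₂, ‖γ' t - γ' t₁‖ ≤ ε) :
    (‖γ' t₁‖ - 2 * ε) * (t₂ - t₁) ≤ ‖γ t₂ - γ t₁‖ := by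
  obtain ⟨y, hy, hγ'y⟩ := (γ' t₁).exists_lt_apply_of_lt_opNorm (sub_lt_self ‖γ' t₁‖ hε)
  -- mean value inequality for `u ↦ γ u y - (u - t₁) • γ' t₁ y`, whose derivative is `≤ ε`
  have hmvt : ‖(γ t₂ - γ t₁) y - (t₂ - t₁) • γ' t₁ y‖ ≤ ε * (t₂ - t₁) := by
    have := (convex_Icc t₁ t₂).norm_image_sub_le_of_norm_hasDerivWithin_le
      (f := fun u => γ u y - (u - t₁) • γ' t₁ y) (f' := fun u => γ' u y - γ' t₁ y)
      (fun u hu => by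
        have := (hderiv u hu y).sub (((hasDerivWithinAt_id u _).sub_const t₁).smul_const
          (γ' t₁ y))
        rwa [one_smul] at this)
      (fun u hu => by
        simpa using ((γ' u - γ' t₁).le_of_opNorm_le (hclose u hu) y).trans
          (mul_le_of_le_one_right hε.le hy.le))
      (left_mem_Icc.2 hle) (right_mem_Icc.2 hle)
    have e : (γ t₂ - γ t₁) y - (t₂ - t₁) • γ' t₁ y =
        (γ t₂ y - (t₂ - t₁) • γ' t₁ y) - (γ t₁ y - (t₁ - t₁) • γ' t₁ y) := by
      simp only [sub_apply, sub_self, zero_smul]; abel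
    rwa [Real.norm_of_nonneg (sub_nonneg.2 hle), ← e] at this
  calc (‖γ' t₁‖ - 2 * ε) * (t₂ - t₁) ≤ (‖γ' t₁ y‖ - ε) * (t₂ - t₁) :=
        mul_le_mul_of_nonneg_right (by linarith) (sub_nonneg.2 hle)
    _ = ‖(t₂ - t₁) • γ' t₁ y‖ - ε * (t₂ - t₁) := by
        rw [norm_smul, Real.norm_of_nonneg (sub_nonneg.2 hle)]; ring
    _ ≤ ‖(γ t₂ - γ t₁) y‖ := by
        linarith [norm_sub_norm_le ((t₂ - t₁) • γ' t₁ y) ((γ t₂ - γ t₁) y),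
          norm_sub_rev ((t₂ - t₁) • γ' t₁ y) ((γ t₂ - γ t₁) y)]
    _ ≤ ‖γ t₂ - γ t₁‖ := by simpa using (γ t₂ - γ t₁).le_opNorm_of_le hy.le

theorem exists_pos_forall_mul_abs_sub_le_dist {a b m : ℝ} (hm : 0 < m)
    (hderiv : ∀ t ∈ Icc a b, ∀ y, HasDerivWithinAt (fun u => γ u y) (γ' t y) (Icc a b) t)
    (hcont : ContinuousOn γ' (Icc a b)) (hlow : ∀ t ∈ Icc a b, m ≤ ‖γ' t‖) :
    ∃ δ > 0, ∀ t ∈ Icc a b, ∀ t' ∈ Icc a b, |t - t'| < δ →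
      m / 2 * |t - t'| ≤ dist (γ t) (γ t') := by
  obtain ⟨δ, hδ, hunif⟩ := Metric.uniformContinuousOn_iff.1
    (isCompact_Icc.uniformContinuousOn_of_continuous hcont) (m / 4) (by positivity)
  have key : ∀ t₁ ∈ Icc a b, ∀ t₂ ∈ Icc a b, t₁ ≤ t₂ → t₂ - t₁ < δ →
      m / 2 * (t₂ - t₁) ≤ dist (γ t₂) (γ t₁) := by
    intro t₁ ht₁ t₂ ht₂ hle hlt
    have hsub : Icc t₁ t₂ ⊆ Icc a b := Icc_subset_Icc ht₁.1 ht₂.2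
    have := mul_sub_le_norm_sub_of_hasDerivWithinAt_apply (γ := γ) (by positivity : 0 < m / 4)
      hle (fun t ht y => (hderiv t (hsub ht) y).mono hsub) fun t ht => by
        rw [← dist_eq_norm]
        refine (hunif t (hsub ht) t₁ ht₁ ?_).le
        rw [Real.dist_eq, abs_of_nonneg (by linarith [ht.1])]
        linarith [ht.2]
    rw [dist_eq_norm]
    nlinarith [hlow t₁ ht₁]
  refine ⟨δ, hδ, fun t ht t' ht' hlt => ?_⟩
  rcases le_total t t' with h | h
  · rw [abs_sub_comm, abs_of_nonneg (sub_nonneg.2 h), dist_comm]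
    exact key t ht t' ht' h (by rwa [abs_sub_comm, abs_of_nonneg (sub_nonneg.2 h)] at hlt)
  · rw [abs_of_nonneg (sub_nonneg.2 h)]
    exact key t' ht' t ht h (by rwa [abs_of_nonneg (sub_nonneg.2 h)] at hlt)

end OperatorValuedCurve

theorem stmt14_general {Y : Type*} [NormedAddCommGroup Y] [NormedSpace ℝ Y]
    [MeasurableSpace (StrongDual ℝ Y)] [BorelSpace (StrongDual ℝ Y)]
    (a b : ℝ)
    (γ γ' : ℝ → StrongDual ℝ Y)
    (hderiv : ∀ t ∈ Set.Icc a b, ∀ y : Y,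
      HasDerivWithinAt (fun s => γ s y) (γ' t y) (Set.Icc a b) t)
    (hcont : ContinuousOn γ' (Set.Icc a b))
    (m : ℝ) (hm : 0 < m) (hlow : ∀ t ∈ Set.Icc a b, m ≤ ‖γ' t‖) :
    ∃ C : ℝ, 1 ≤ C ∧ ∀ x ∈ γ '' Set.Icc a b, ∀ r : ℝ,
      0 < r → r ≤ Metric.diam (γ '' Set.Icc a b) →
      ENNReal.ofReal (r / C) ≤ μH[1] (γ '' Set.Icc a b ∩ ball x r) ∧
      μH[1] (γ '' Set.Icc a b ∩ ball x r) ≤ ENNReal.ofReal (C * r) := by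
  obtain ⟨M, hM⟩ := isCompact_Icc.exists_bound_of_continuousOn hcont
  have hLip : LipschitzOnWith M.toNNReal γ (Icc a b) :=
    lipschitzOnWith_of_hasDerivWithinAt_apply (convex_Icc a b) hderiv fun t ht =>
      (hM t ht).trans (Real.le_coe_toNNReal M)
  obtain ⟨δ, hδ, hanti⟩ := exists_pos_forall_mul_abs_sub_le_dist hm hderiv hcont hlow
  exact hLip.ahlfors_regular_image_Icc (half_pos hm) hδ hanti

/-- If `γ : [a,b] → X = Y*` is `C¹_{w*}` with `inf ‖γ'‖ > 0`, then
`Γ = γ([a,b])` is 1-Ahlfors regular. -/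
theorem stmt14 {Y : Type*} [NormedAddCommGroup Y] [NormedSpace ℝ Y]
    [TopologicalSpace.SeparableSpace Y]
    [MeasurableSpace (StrongDual ℝ Y)] [BorelSpace (StrongDual ℝ Y)]
    (a b : ℝ) (hab : a ≤ b)
    (γ γ' : ℝ → StrongDual ℝ Y)
    (hderiv : ∀ t ∈ Set.Icc a b, ∀ y : Y,
      HasDerivWithinAt (fun s => γ s y) (γ' t y) (Set.Icc a b) t)
    (hcont : ContinuousOn γ' (Set.Icc a b))
    (m : ℝ) (hm : 0 < m) (hlow : ∀ t ∈ Set.Icc a b, m ≤ ‖γ' t‖) :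
    ∃ C : ℝ, 1 ≤ C ∧ ∀ x ∈ γ '' Set.Icc a b, ∀ r : ℝ,
      0 < r → r ≤ Metric.diam (γ '' Set.Icc a b) →
      ENNReal.ofReal (r / C) ≤ μH[1] (γ '' Set.Icc a b ∩ ball x r) ∧
      μH[1] (γ '' Set.Icc a b ∩ ball x r) ≤ ENNReal.ofReal (C * r) :=
  stmt14_general a b γ γ' hderiv hcont m hm hlow
end

section
/- Let (M,d) be a doubling metric space and Ω ⊊ M open, Ω ≠ ∅. Suppose {U_i}_{i∈ℕ} are pairwise disjoint Borel subsets of Ω with points x_i ∈ U_i and integers k_i such that B(x_i, 8^{−k_i}/16) ⊆ U_i ⊆ B(x_i, 2·8^{−k_i}) and 32·8^{−k_i} ≤ d(U_i, M\Ω) ≤ 320·8^{−k_i}. If the balls B(x_i, 16·8^{−k_i}) and B(x_j, 16·8^{−k_j}) intersect, then d(U_j, M\Ω) ≤ 3 d(U_i, M\Ω) and d(x_i, x_j) ≤ 640·8^{−k_i}. -/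
open Metric

/-- The distance between two subsets of a metric space. -/
noncomputable def setDist {M : Type*} [MetricSpace M] (s t : Set M) : ℝ :=
  sInf ((fun p : M × M => dist p.1 p.2) '' s ×ˢ t)

lemma setDist_le_dist {M : Type*} [MetricSpace M] {s t : Set M} {u c : M}
    (hu : u ∈ s) (hc : c ∈ t) : setDist s t ≤ dist u c := by
  apply csInf_le
  · exact ⟨0, by rintro r ⟨⟨p, q⟩, ⟨hp, hq⟩, rfl⟩; exact dist_nonneg⟩
  · exact ⟨(u, c), ⟨hu, hc⟩, rfl⟩

lemma le_setDist_of {M : Type*} [MetricSpace M] {s t : Set M} {r : ℝ}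
    (hs : s.Nonempty) (ht : t.Nonempty)
    (h : ∀ u ∈ s, ∀ c ∈ t, r ≤ dist u c) : r ≤ setDist s t := by
  apply le_csInf
  · obtain ⟨u, hu⟩ := hs
    obtain ⟨c, hc⟩ := ht
    exact ⟨dist u c, ⟨(u, c), ⟨hu, hc⟩, rfl⟩⟩
  · rintro b ⟨⟨p, q⟩, ⟨hp, hq⟩, rfl⟩
    exact h p hp q hq

/-- Comparison of scales for a Whitney-type family: if the enlarged balls of two
Whitney pieces intersect, the distances of the pieces to the complement of `Ω`
are comparable and their centers are close. -/
theorem stmt15 {M : Type*} [MetricSpace M]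
    (N : ℕ) (hdoub : ∀ (x : M) (r : ℝ), ∃ t : Finset M, t.card ≤ N ∧
      ball x r ⊆ ⋃ y ∈ t, ball y (r / 2))
    (Ω : Set M) (hΩo : IsOpen Ω) (hΩne : Ω.Nonempty) (hΩne' : Ω ≠ Set.univ)
    (U : ℕ → Set M) (x : ℕ → M) (k : ℕ → ℤ)
    (hdisj : Pairwise (Function.onFun Disjoint U))
    (hUΩ : ∀ i, U i ⊆ Ω)
    (hxU : ∀ i, x i ∈ U i)
    (hball₁ : ∀ i, ball (x i) ((8 : ℝ) ^ (-(k i)) / 16) ⊆ U i)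
    (hball₂ : ∀ i, U i ⊆ ball (x i) (2 * (8 : ℝ) ^ (-(k i))))
    (hdist₁ : ∀ i, 32 * (8 : ℝ) ^ (-(k i)) ≤ setDist (U i) Ωᶜ)
    (hdist₂ : ∀ i, setDist (U i) Ωᶜ ≤ 320 * (8 : ℝ) ^ (-(k i)))
    (i j : ℕ)
    (hij : (ball (x i) (16 * (8 : ℝ) ^ (-(k i))) ∩
            ball (x j) (16 * (8 : ℝ) ^ (-(k j)))).Nonempty) :
    setDist (U j) Ωᶜ ≤ 3 * setDist (U i) Ωᶜ ∧
      dist (x i) (x j) ≤ 640 * (8 : ℝ) ^ (-(k i)) := by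
  set a : ℝ := (8 : ℝ) ^ (-(k i)) with ha
  set b : ℝ := (8 : ℝ) ^ (-(k j)) with hb
  have ha0 : (0 : ℝ) < a := zpow_pos (by norm_num) _
  have hb0 : (0 : ℝ) < b := zpow_pos (by norm_num) _
  -- Ωᶜ is nonempty
  have hΩc : Ωᶜ.Nonempty := by
    rw [Set.nonempty_compl]; exact hΩne'
  -- distance between centers
  obtain ⟨y, hyi, hyj⟩ := hij
  have hd : dist (x i) (x j) ≤ 16 * a + 16 * b := by
    have h1 : dist y (x i) < 16 * a := mem_ball.mp hyi
    have h2 : dist y (x j) < 16 * b := mem_ball.mp hyj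
    calc dist (x i) (x j) ≤ dist (x i) y + dist y (x j) := dist_triangle _ _ _
      _ ≤ 16 * a + 16 * b := by rw [dist_comm (x i) y]; linarith
  -- key comparison: D_p ≤ D_q + d(x_q, x_p) + 2·8^{-k_q}
  have key : ∀ p q : ℕ, setDist (U p) Ωᶜ ≤
      setDist (U q) Ωᶜ + dist (x q) (x p) + 2 * (8 : ℝ) ^ (-(k q)) := by
    intro p q
    have h := le_setDist_of (r := setDist (U p) Ωᶜ -
        (dist (x q) (x p) + 2 * (8 : ℝ) ^ (-(k q)))) ⟨x q, hxU q⟩ hΩc ?_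
    · linarith
    · intro u hu c hc
      have h1 : setDist (U p) Ωᶜ ≤ dist (x p) c := setDist_le_dist (hxU p) hc
      have h2 : dist (x p) c ≤ dist (x p) (x q) + dist (x q) u + dist u c :=
        dist_triangle4 _ _ _ _
      have h3 : dist (x q) u ≤ 2 * (8 : ℝ) ^ (-(k q)) := by
        have := mem_ball.mp (hball₂ q hu)
        rw [dist_comm]; linarith
      have h4 : dist (x p) (x q) = dist (x q) (x p) := dist_comm _ _
      linarith
  have h1 := key j i
  have h2 := key i j
  rw [dist_comm (x j) (x i)] at h2
  have h4 := hdist₁ i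
  have h5 := hdist₂ i
  have h6 := hdist₁ j
  have h7 := hdist₂ j
  rw [← ha] at h1 h4 h5
  rw [← hb] at h2 h6 h7
  -- case split: b ≤ a or 8a ≤ b
  have hcases : b ≤ a ∨ 8 * a ≤ b := by
    rcases le_or_gt (k i) (k j) with h | h
    · left
      rw [ha, hb]
      exact zpow_le_zpow_right₀ (by norm_num) (by omega)
    · right
      have : a * 8 = (8 : ℝ) ^ (-(k i) + 1) := (zpow_add_one₀ (by norm_num) _).symm
      have h8 : (8 : ℝ) ^ (-(k i) + 1) ≤ b := by
        rw [hb]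
        exact zpow_le_zpow_right₀ (by norm_num) (by omega)
      linarith
  have goal1 : setDist (U j) Ωᶜ ≤ 3 * setDist (U i) Ωᶜ := by
    rcases hcases with hc | hc
    · linarith
    · linarith
  refine ⟨goal1, ?_⟩
  -- 32b ≤ D_j ≤ 3 D_i ≤ 960a, so b ≤ 30a, d ≤ 16a + 480a
  linarith
end

section
/- Let (M,d) be a doubling metric space and Ω ⊊ M open and nonempty. Then there exists a countable family 𝒰 = {U_i} of pairwise disjoint Borel subsets of Ω with ⋃ U_i = Ω, such that for each i there exist x_i ∈ U_i and k_i ∈ ℤ with B(x_i, 8^{−k_i}/16) ⊆ U_i ⊆ B(x_i, 2·8^{−k_i}) and 32·8^{−k_i} ≤ d(U_i, M\Ω) ≤ 320·8^{−k_i}; moreover there is a constant C_D, depending only on the doubling constant, such that each ball B(x_i, 16·8^{−k_i}) meets at most C_D of the balls B(x_j, 16·8^{−k_j}). -/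
open Metric

/-!
Give every `x ∈ Ω` a radius `ρ x = 8 ^ (-k x)` with `40 ρ x < d(x, Ωᶜ) ≤ 320 ρ x`, and take a
maximal set `X ⊆ Ω` whose points are separated by `(ρ a + ρ b) / 16`. The radius varies slowly
(`ρ x < 14 ρ y` as soon as `d(x, y) < 16 (ρ x + ρ y)`), so maximality makes the balls
`B(p, 2 ρ p)`, `p ∈ X`, cover `Ω`, while the balls `B(p, ρ p / 16)` are disjoint; disjointifying
the large balls around the small ones gives the sets `U p`. The doubling condition bounds the
number of separated points in a ball, which makes `X` countable and bounds the overlaps.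
-/

open Set Function

theorem exists_maximal_pairwise_subset {α : Type*} (r : α → α → Prop) (s : Set α) :
    ∃ X, Maximal (fun X => X ⊆ s ∧ X.Pairwise r) X :=
  zorn_subset _ fun c hcs hc => ⟨⋃₀ c,
    ⟨sUnion_subset fun _ hX => (hcs hX).1, hc.pairwise_sUnion.2 fun _ hX => (hcs hX).2⟩,
    fun _ => subset_sUnion_of_mem⟩

theorem Maximal.exists_not_rel_of_pairwise {α : Type*} {r : α → α → Prop} [Std.Symm r]
    {s X : Set α} (hX : Maximal (fun X => X ⊆ s ∧ X.Pairwise r) X) {z : α} (hz : z ∈ s)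
    (hzX : z ∉ X) : ∃ p ∈ X, ¬r z p := by
  by_contra! h
  refine hzX (hX.2 ⟨insert_subset hz hX.1.1, ?_⟩ (subset_insert z X) (mem_insert z X))
  exact pairwise_insert_of_symm.2 ⟨hX.1.2, fun p hp _ => h p hp⟩

theorem Set.Countable.exists_injective_range_eq {α : Type*} {X : Set α} (hX : X.Countable) :
    ∃ (ι : Type) (_ : Countable ι) (q : ι → α), Injective q ∧ range q = X := by
  have := hX.to_subtype
  refine ⟨Shrink.{0} X, Countable.of_equiv _ (equivShrink.{0} X),
    fun i => (equivShrink.{0} X).symm i,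
    Subtype.val_injective.comp (equivShrink.{0} X).symm.injective, ?_⟩
  rw [range_comp', (equivShrink.{0} X).symm.surjective.range_eq, image_univ, Subtype.range_coe]

section Disjointify

variable {α ι : Type*} [MeasurableSpace α] [Countable ι]

theorem exists_pairwise_disjoint_measurableSet_subset_iUnion_eq {B : ι → Set α}
    (hB : ∀ i, MeasurableSet (B i)) :
    ∃ V : ι → Set α, (∀ i, MeasurableSet (V i)) ∧ Pairwise (Disjoint on V) ∧
      (∀ i, V i ⊆ B i) ∧ ⋃ i, V i = ⋃ i, B i := by
  classical
  obtain ⟨f, hf⟩ := exists_injective_nat ι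
  refine ⟨fun i => B i \ ⋃ (j) (_ : f j < f i), B j,
    fun i => (hB i).diff (.iUnion fun j => .iUnion fun _ => hB j), ?_,
    fun i => sdiff_subset, (iUnion_mono fun i => sdiff_subset).antisymm fun z hz => ?_⟩
  · have hlt : ∀ i j, f i < f j → Disjoint (B i \ ⋃ (k) (_ : f k < f i), B k)
        (B j \ ⋃ (k) (_ : f k < f j), B k) := fun i j hij =>
      disjoint_left.2 fun z hzi hzj => hzj.2 (mem_biUnion hij hzi.1)
    intro i j hij
    rcases (hf.ne hij).lt_or_gt with h | h
    · exact hlt i j h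
    · exact (hlt j i h).symm
  · have hex : ∃ n, ∃ i, f i = n ∧ z ∈ B i := by
      obtain ⟨i, hi⟩ := mem_iUnion.1 hz
      exact ⟨f i, i, rfl, hi⟩
    obtain ⟨i, hfi, hzi⟩ := Nat.find_spec hex
    refine mem_iUnion.2 ⟨i, hzi, ?_⟩
    simp only [mem_iUnion, not_exists]
    exact fun j hj hzj => Nat.find_min hex (hfi ▸ hj) ⟨j, rfl, hzj⟩

theorem exists_pairwise_disjoint_measurableSet_between {S B : ι → Set α}
    (hS : ∀ i, MeasurableSet (S i)) (hB : ∀ i, MeasurableSet (B i)) (hSB : ∀ i, S i ⊆ B i)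
    (hSd : Pairwise (Disjoint on S)) :
    ∃ U : ι → Set α, (∀ i, MeasurableSet (U i)) ∧ Pairwise (Disjoint on U) ∧
      (∀ i, S i ⊆ U i ∧ U i ⊆ B i) ∧ ⋃ i, U i = ⋃ i, B i := by
  obtain ⟨V, hVm, hVd, hVB, hVU⟩ := exists_pairwise_disjoint_measurableSet_subset_iUnion_eq hB
  refine ⟨fun i => S i ∪ (V i \ ⋃ j, S j), fun i => (hS i).union ((hVm i).diff (.iUnion hS)),
    fun i j hij => ?_,
    fun i => ⟨subset_union_left, union_subset (hSB i) (sdiff_subset.trans (hVB i))⟩, ?_⟩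
  · refine Disjoint.union_left (Disjoint.union_right (hSd hij) ?_) (Disjoint.union_right ?_ ?_)
    · exact disjoint_sdiff_right.mono_left (subset_iUnion S i)
    · exact disjoint_sdiff_left.mono_right (subset_iUnion S j)
    · exact (hVd hij).mono sdiff_subset sdiff_subset
  · rw [iUnion_union_distrib, ← iUnion_sdiff, hVU, union_sdiff_self,
      union_eq_right.2 (iUnion_mono hSB)]

end Disjointify

section Metric

variable {M : Type*} [MetricSpace M]

theorem setDist_le_infDist {s t : Set M} {x : M} (hx : x ∈ s) (ht : t.Nonempty) :
    setDist s t ≤ infDist x t :=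
  (le_infDist ht).2 fun y hy =>
    csInf_le ⟨0, by rintro _ ⟨p, -, rfl⟩; exact dist_nonneg⟩ ⟨(x, y), ⟨hx, hy⟩, rfl⟩

theorem infDist_sub_le_setDist {s t : Set M} {x : M} {R : ℝ} (hs : s ⊆ ball x R)
    (hsne : s.Nonempty) (ht : t.Nonempty) : infDist x t - R ≤ setDist s t := by
  refine le_csInf ((hsne.prod ht).image _) ?_
  rintro _ ⟨⟨u, y⟩, ⟨hu, hy⟩, rfl⟩
  have := mem_ball'.1 (hs hu)
  linarith [infDist_le_infDist_add_dist (x := x) (y := u) (s := t),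
    infDist_le_dist_of_mem hy (x := u)]

def HasDoublingCovers (M : Type*) [MetricSpace M] (N : ℕ) : Prop :=
  ∀ (x : M) (r : ℝ), ∃ t : Finset M, t.card ≤ N ∧ ball x r ⊆ ⋃ y ∈ t, ball y (r / 2)

namespace HasDoublingCovers

variable {N : ℕ} (hM : HasDoublingCovers M N)
include hM

theorem encard_le_of_pairwise_le_dist (m : ℕ) {x : M} {r : ℝ} {T : Set M}
    (hT : T ⊆ ball x r) (hsep : T.Pairwise fun a b => 2 * r / 2 ^ m ≤ dist a b) :
    T.encard ≤ N ^ m := by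
  induction m generalizing x r T with
  | zero =>
    refine encard_le_one_iff.2 fun a b ha hb => by_contra fun hne => ?_
    have hab := hsep ha hb hne
    rw [pow_zero, div_one] at hab
    have := dist_lt_add_of_nonempty_ball_inter_ball
      ⟨x, mem_ball_comm.1 (hT ha), mem_ball_comm.1 (hT hb)⟩
    linarith
  | succ m ih =>
    obtain ⟨t, ht, hcover⟩ := hM x r
    have hpiece : ∀ y ∈ t, (T ∩ ball y (r / 2)).encard ≤ N ^ m := fun y _ =>
      ih inter_subset_right <| (hsep.mono inter_subset_left).imp fun _ _ h =>
        (le_of_eq (by ring)).trans h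
    calc T.encard ≤ (⋃ y ∈ t, T ∩ ball y (r / 2)).encard :=
          encard_le_encard fun a ha => by
            obtain ⟨y, hy, hay⟩ := mem_iUnion₂.1 (hcover (hT ha))
            exact mem_iUnion₂.2 ⟨y, hy, ha, hay⟩
      _ ≤ ∑ y ∈ t, (T ∩ ball y (r / 2)).encard := t.set_encard_biUnion_le _
      _ ≤ ∑ _y ∈ t, (N ^ m : ℕ∞) := Finset.sum_le_sum hpiece
      _ ≤ N ^ (m + 1) := by
          rw [Finset.sum_const, nsmul_eq_mul, pow_succ', ← Nat.cast_pow]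
          exact mul_le_mul_left (by exact_mod_cast ht) _

theorem finite_of_pairwise_le_dist {x : M} {r ε : ℝ} {T : Set M} (hT : T ⊆ ball x r)
    (hε : 0 < ε) (hsep : T.Pairwise fun a b => ε ≤ dist a b) : T.Finite := by
  obtain ⟨m, hm⟩ := pow_unbounded_of_one_lt (2 * r / ε) one_lt_two
  refine finite_of_encard_le_coe (hM.encard_le_of_pairwise_le_dist m hT (hsep.imp fun a b h => ?_))
  rw [div_lt_iff₀ hε] at hm
  rw [div_le_iff₀ (by positivity)]
  have := mul_le_mul_of_nonneg_left h (pow_nonneg zero_le_two m : (0 : ℝ) ≤ 2 ^ m)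
  linarith

theorem countable_of_pairwise_le_dist {T : Set M} {ε : M → ℝ} (hε : ∀ a ∈ T, 0 < ε a)
    (hsep : T.Pairwise fun a b => ε a ≤ dist a b) : T.Countable := by
  rcases T.eq_empty_or_nonempty with rfl | ⟨c, -⟩
  · exact countable_empty
  have hT : T ⊆ ⋃ n : ℕ, {a ∈ T | 1 / ((n : ℝ) + 1) < ε a} ∩ ball c n := fun a ha => by
    obtain ⟨n₁, hn₁⟩ := exists_nat_one_div_lt (hε a ha)
    obtain ⟨n₂, hn₂⟩ := exists_nat_gt (dist a c)
    refine mem_iUnion.2 ⟨max n₁ n₂, ⟨ha, hn₁.trans_le' ?_⟩, ?_⟩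
    · gcongr; exact le_max_left _ _
    · exact mem_ball.2 (hn₂.trans_le (by exact_mod_cast le_max_right _ _))
  refine (countable_iUnion fun n => ?_).mono hT
  refine (hM.finite_of_pairwise_le_dist inter_subset_right (ε := 1 / ((n : ℝ) + 1))
    (by positivity) fun a ha b hb hab => ?_).countable
  exact ha.1.2.le.trans (hsep ha.1.1 hb.1.1 hab)

end HasDoublingCovers

def IsWhitneyRadius (Ω : Set M) (ρ : M → ℝ) : Prop :=
  ∀ x ∈ Ω, 40 * ρ x < infDist x Ωᶜ ∧ infDist x Ωᶜ ≤ 320 * ρ x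

theorem exists_isWhitneyRadius_zpow {Ω : Set M} (hΩ : IsOpen Ω) (hΩc : Ωᶜ.Nonempty) :
    ∃ k : M → ℤ, IsWhitneyRadius Ω fun x => (8 : ℝ) ^ (-k x) := by
  have hk : ∀ x, ∃ k : ℤ, x ∈ Ω → 40 * (8 : ℝ) ^ (-k) < infDist x Ωᶜ ∧
      infDist x Ωᶜ ≤ 320 * (8 : ℝ) ^ (-k) := fun x => by
    by_cases hx : x ∈ Ω
    · have hpos : 0 < infDist x Ωᶜ :=
        (hΩ.isClosed_compl.notMem_iff_infDist_pos hΩc).1 (not_not_intro hx)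
      obtain ⟨n, hn, hn'⟩ := exists_mem_Ioc_zpow (div_pos hpos (by norm_num : (0 : ℝ) < 40))
        (by norm_num : (1 : ℝ) < 8)
      refine ⟨-n, fun _ => ⟨?_, ?_⟩⟩ <;> rw [neg_neg]
      · linarith
      · rw [zpow_add_one₀ (by norm_num)] at hn'
        linarith
    · exact ⟨0, fun h => absurd h hx⟩
  choose k hk using hk
  exact ⟨k, hk⟩

def WhitneySeparated (ρ : M → ℝ) (a b : M) : Prop :=
  (ρ a + ρ b) / 16 ≤ dist a b

instance (ρ : M → ℝ) : Std.Symm (WhitneySeparated ρ) :=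
  ⟨fun a b h => by rwa [WhitneySeparated, add_comm, dist_comm]⟩

theorem WhitneySeparated.disjoint_ball {ρ : M → ℝ} {a b : M} (h : WhitneySeparated ρ a b) :
    Disjoint (ball a (ρ a / 16)) (ball b (ρ b / 16)) :=
  ball_disjoint_ball (by rw [← add_div]; exact h)

namespace IsWhitneyRadius

variable {Ω : Set M} {ρ : M → ℝ} (hρ : IsWhitneyRadius Ω ρ)
include hρ

theorem pos {x : M} (hx : x ∈ Ω) : 0 < ρ x := by
  have := hρ x hx
  linarith

theorem ball_subset {x : M} (hx : x ∈ Ω) : ball x (40 * ρ x) ⊆ Ω :=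
  (ball_subset_ball (hρ x hx).1.le).trans ball_infDist_compl_subset

theorem lt_mul_of_dist_lt {x y : M} (hx : x ∈ Ω) (hy : y ∈ Ω)
    (h : dist x y < 16 * (ρ x + ρ y)) : ρ x < 14 * ρ y := by
  have := infDist_le_infDist_add_dist (x := x) (y := y) (s := Ωᶜ)
  linarith [hρ x hx, hρ y hy]

theorem exists_dist_lt_of_maximal {X : Set M}
    (hX : Maximal (fun X => X ⊆ Ω ∧ X.Pairwise (WhitneySeparated ρ)) X) {z : M} (hz : z ∈ Ω) :
    ∃ p ∈ X, dist z p < 2 * ρ p := by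
  by_cases hzX : z ∈ X
  · exact ⟨z, hzX, by simpa using hρ.pos hz⟩
  obtain ⟨p, hpX, hzp⟩ := hX.exists_not_rel_of_pairwise hz hzX
  rw [WhitneySeparated, not_le] at hzp
  have hp := hX.1.1 hpX
  have := hρ.lt_mul_of_dist_lt hz hp (by linarith [hρ.pos hz, hρ.pos hp])
  exact ⟨p, hpX, by linarith [hρ.pos hp]⟩

theorem iUnion_ball_eq_of_maximal {ι : Type*} {q : ι → M}
    (hq : Maximal (fun X => X ⊆ Ω ∧ X.Pairwise (WhitneySeparated ρ)) (range q)) :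
    ⋃ i, ball (q i) (2 * ρ (q i)) = Ω := by
  refine (iUnion_subset fun i => ?_).antisymm fun z hz => ?_
  · have hi := hq.1.1 (mem_range_self i)
    exact (ball_subset_ball (by linarith [hρ.pos hi])).trans (hρ.ball_subset hi)
  · obtain ⟨_, ⟨i, rfl⟩, hzi⟩ := hρ.exists_dist_lt_of_maximal hq hz
    exact mem_iUnion.2 ⟨i, hzi⟩

variable {N : ℕ} (hM : HasDoublingCovers M N)
include hM

theorem countable_of_pairwise {X : Set M} (hXΩ : X ⊆ Ω)
    (hX : X.Pairwise (WhitneySeparated ρ)) : X.Countable :=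
  hM.countable_of_pairwise_le_dist (ε := fun a => ρ a / 16)
    (fun a ha => by linarith [hρ.pos (hXΩ ha)]) fun a ha b hb hab => by
      have := hX ha hb hab
      rw [WhitneySeparated] at this
      linarith [hρ.pos (hXΩ hb)]

/-- The overlapping points lie in `ball (q i) (240 * ρ (q i))` and are `ρ (q i) / 112`-separated,
and `2 ^ 16 ≥ 2 * 240 * 112`. -/
theorem encard_ball_inter_ball_nonempty_le {ι : Type*} {q : ι → M} (hq : Injective q)
    (hqΩ : range q ⊆ Ω) (hsep : (range q).Pairwise (WhitneySeparated ρ)) (i : ι) :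
    {j | (ball (q i) (16 * ρ (q i)) ∩ ball (q j) (16 * ρ (q j))).Nonempty}.encard ≤ N ^ 16 := by
  set J := {j | (ball (q i) (16 * ρ (q i)) ∩ ball (q j) (16 * ρ (q j))).Nonempty}
  have hΩ : ∀ j, q j ∈ Ω := fun j => hqΩ (mem_range_self j)
  have hcomp : ∀ j ∈ J, dist (q j) (q i) < 16 * (ρ (q j) + ρ (q i)) ∧
      ρ (q j) < 14 * ρ (q i) ∧ ρ (q i) < 14 * ρ (q j) := fun j hj => by
    have hd := dist_lt_add_of_nonempty_ball_inter_ball hj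
    rw [dist_comm] at hd
    exact ⟨by linarith, hρ.lt_mul_of_dist_lt (hΩ j) (hΩ i) (by linarith),
      hρ.lt_mul_of_dist_lt (hΩ i) (hΩ j) (by rw [dist_comm]; linarith)⟩
  rw [← hq.encard_image]
  refine hM.encard_le_of_pairwise_le_dist 16 (x := q i) (r := 240 * ρ (q i)) ?_ ?_
  · rintro _ ⟨j, hj, rfl⟩
    obtain ⟨hd, hji, -⟩ := hcomp j hj
    exact mem_ball.2 (by linarith)
  · rintro _ ⟨j, hj, rfl⟩ _ ⟨j', hj', rfl⟩ hne
    have := hsep (mem_range_self j) (mem_range_self j') hne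
    rw [WhitneySeparated] at this
    linarith [(hcomp j hj).2.2, (hcomp j' hj').2.2, hρ.pos (hΩ i)]

end IsWhitneyRadius

end Metric

theorem stmt16_general {M : Type*} [MetricSpace M] [MeasurableSpace M] [BorelSpace M]
    (N : ℕ) (hdoub : ∀ (x : M) (r : ℝ), ∃ t : Finset M, t.card ≤ N ∧
      ball x r ⊆ ⋃ y ∈ t, ball y (r / 2))
    (Ω : Set M) (hΩo : IsOpen Ω) (hΩne' : Ω ≠ Set.univ) :
    ∃ (ι : Type) (_ : Countable ι) (U : ι → Set M) (x : ι → M) (k : ι → ℤ),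
      (∀ i, MeasurableSet (U i)) ∧
      Pairwise (Function.onFun Disjoint U) ∧
      (⋃ i, U i) = Ω ∧
      (∀ i, x i ∈ U i) ∧
      (∀ i, ball (x i) ((8 : ℝ) ^ (-(k i)) / 16) ⊆ U i) ∧
      (∀ i, U i ⊆ ball (x i) (2 * (8 : ℝ) ^ (-(k i)))) ∧
      (∀ i, 32 * (8 : ℝ) ^ (-(k i)) ≤ setDist (U i) Ωᶜ ∧
            setDist (U i) Ωᶜ ≤ 320 * (8 : ℝ) ^ (-(k i))) ∧
      ∃ CD : ℕ, ∀ i,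
        {j | (ball (x i) (16 * (8 : ℝ) ^ (-(k i))) ∩
              ball (x j) (16 * (8 : ℝ) ^ (-(k j)))).Nonempty}.Finite ∧
        {j | (ball (x i) (16 * (8 : ℝ) ^ (-(k i))) ∩
              ball (x j) (16 * (8 : ℝ) ^ (-(k j)))).Nonempty}.ncard ≤ CD := by
  have hΩc : Ωᶜ.Nonempty := nonempty_compl.2 hΩne'
  obtain ⟨K, hK⟩ := exists_isWhitneyRadius_zpow hΩo hΩc
  set ρ : M → ℝ := fun x => (8 : ℝ) ^ (-K x)
  obtain ⟨X, hX⟩ := exists_maximal_pairwise_subset (WhitneySeparated ρ) Ω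
  obtain ⟨ι, hι, q, hq, rfl⟩ :=
    (hK.countable_of_pairwise hdoub hX.1.1 hX.1.2).exists_injective_range_eq
  have hqΩ : ∀ i, q i ∈ Ω := fun i => hX.1.1 (mem_range_self i)
  obtain ⟨U, hUm, hUd, hU, hUB⟩ := exists_pairwise_disjoint_measurableSet_between
    (S := fun i => ball (q i) (ρ (q i) / 16)) (B := fun i => ball (q i) (2 * ρ (q i)))
    (fun _ => measurableSet_ball) (fun _ => measurableSet_ball)
    (fun i => ball_subset_ball (by linarith [hK.pos (hqΩ i)]))
    (fun i j hij => (hX.1.2 (mem_range_self i) (mem_range_self j) (hq.ne hij)).disjoint_ball)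
  have hqU : ∀ i, q i ∈ U i := fun i => (hU i).1 (mem_ball_self (by positivity))
  refine ⟨ι, hι, U, q, fun i => K (q i), hUm, hUd, hUB.trans (hK.iUnion_ball_eq_of_maximal hX),
    hqU, fun i => (hU i).1, fun i => (hU i).2, fun i => ⟨?_, ?_⟩, N ^ 16,
    fun i => encard_le_coe_iff_finite_ncard_le.1 ?_⟩
  · show 32 * ρ (q i) ≤ setDist (U i) Ωᶜ
    linarith [(hK _ (hqΩ i)).1, hK.pos (hqΩ i), infDist_sub_le_setDist (hU i).2 ⟨q i, hqU i⟩ hΩc]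
  · exact (setDist_le_infDist (hqU i) hΩc).trans (hK _ (hqΩ i)).2
  · exact_mod_cast hK.encard_ball_inter_ball_nonempty_le hdoub hq hX.1.1 hX.1.2 i

/-- Christ–Whitney decomposition of a nonempty proper open subset of a doubling
metric space, with bounded overlap of the enlarged balls. -/
theorem stmt16 {M : Type*} [MetricSpace M] [MeasurableSpace M] [BorelSpace M]
    (N : ℕ) (hdoub : ∀ (x : M) (r : ℝ), ∃ t : Finset M, t.card ≤ N ∧
      ball x r ⊆ ⋃ y ∈ t, ball y (r / 2))
    (Ω : Set M) (hΩo : IsOpen Ω) (hΩne : Ω.Nonempty) (hΩne' : Ω ≠ Set.univ) :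
    ∃ (ι : Type) (_ : Countable ι) (U : ι → Set M) (x : ι → M) (k : ι → ℤ),
      (∀ i, MeasurableSet (U i)) ∧
      Pairwise (Function.onFun Disjoint U) ∧
      (⋃ i, U i) = Ω ∧
      (∀ i, x i ∈ U i) ∧
      (∀ i, ball (x i) ((8 : ℝ) ^ (-(k i)) / 16) ⊆ U i) ∧
      (∀ i, U i ⊆ ball (x i) (2 * (8 : ℝ) ^ (-(k i)))) ∧
      (∀ i, 32 * (8 : ℝ) ^ (-(k i)) ≤ setDist (U i) Ωᶜ ∧
            setDist (U i) Ωᶜ ≤ 320 * (8 : ℝ) ^ (-(k i))) ∧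
      ∃ CD : ℕ, ∀ i,
        {j | (ball (x i) (16 * (8 : ℝ) ^ (-(k i))) ∩
              ball (x j) (16 * (8 : ℝ) ^ (-(k j)))).Nonempty}.Finite ∧
        {j | (ball (x i) (16 * (8 : ℝ) ^ (-(k i))) ∩
              ball (x j) (16 * (8 : ℝ) ^ (-(k j)))).Nonempty}.ncard ≤ CD :=
  stmt16_general N hdoub Ω hΩo hΩne'
end

section
/- Let ν be a Borel measure on a metric space, Ω ⊆ supp(ν), and {U_i}_{i∈ℕ} pairwise disjoint Borel subsets of Ω with Ω = ⋃_i U_i, with associated balls B_i ⊇ U_i and enlarged balls B_i' ⊇ B_i such that every point of Ω lies in at most C_D of the balls B_i'. Let b = 2C_D and let I₂ = {i : ν(B_i') > b ν(B_i)} be the indices of non-b-doubling balls. Then Σ_{i∈I₂} ν(U_i) ≤ ½ ν(Ω); equivalently, Σ_{i∉I₂} ν(U_i) ≥ ½ ν(Ω). -/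
open MeasureTheory Metric ENNReal

/-- The non-`b`-doubling Whitney pieces carry at most half the measure of `Ω`:
with `b = 2 C_D` and bounded overlap `C_D` of the enlarged balls,
`Σ_{i ∈ I₂} ν(U_i) ≤ ½ ν(Ω)` where `I₂ = {i : ν(B_i') > b ν(B_i)}`. -/
theorem stmt19 {M : Type*} [MetricSpace M] [MeasurableSpace M] [BorelSpace M]
    (ν : Measure M) (Ω : Set M)
    (hΩsupp : ∀ x ∈ Ω, ∀ r : ℝ, 0 < r → 0 < ν (ball x r))
    (U : ℕ → Set M) (xc : ℕ → M) (r r' : ℕ → ℝ)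
    (hUm : ∀ i, MeasurableSet (U i))
    (hdisj : Pairwise (Function.onFun Disjoint U))
    (hUΩ : ∀ i, U i ⊆ Ω) (hUnion : (⋃ i, U i) = Ω)
    (hUB : ∀ i, U i ⊆ ball (xc i) (r i))
    (hrr' : ∀ i, r i ≤ r' i)
    (hB'Ω : ∀ i, ball (xc i) (r' i) ⊆ Ω)
    (CD : ℕ) (hCD : 0 < CD)
    (hoverlap : ∀ p ∈ Ω, {i | p ∈ ball (xc i) (r' i)}.Finite ∧
      {i | p ∈ ball (xc i) (r' i)}.ncard ≤ CD) :
    ∑' i : {i : ℕ // (2 * CD : ℝ≥0∞) * ν (ball (xc i) (r i)) < ν (ball (xc i) (r' i))},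
        ν (U i.1) ≤ ν Ω / 2 := by
  have hΩm : MeasurableSet Ω := hUnion ▸ MeasurableSet.iUnion hUm
  have hCD0 : (CD : ℝ≥0∞) ≠ 0 := Nat.cast_ne_zero.mpr hCD.ne'
  have hCDtop : (CD : ℝ≥0∞) ≠ ⊤ := natCast_ne_top CD
  set b : ℝ≥0∞ := 2 * CD with hbdef
  have hb0 : b ≠ 0 := mul_ne_zero two_ne_zero hCD0
  have hbtop : b ≠ ⊤ := mul_ne_top (by norm_num) hCDtop
  -- bounded overlap: sum of measures of enlarged balls is at most CD * ν Ω
  have hsum : ∑' i : ℕ, ν (ball (xc i) (r' i)) ≤ (CD : ℝ≥0∞) * ν Ω := by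
    have h1 : ∑' i : ℕ, ν (ball (xc i) (r' i))
        = ∫⁻ p, ∑' i : ℕ, (ball (xc i) (r' i)).indicator (fun _ => (1 : ℝ≥0∞)) p ∂ν := by
      rw [lintegral_tsum fun i =>
        ((measurable_const.indicator measurableSet_ball).aemeasurable)]
      exact tsum_congr fun i => (lintegral_indicator_one measurableSet_ball).symm
    rw [h1]
    have h2 : ∀ p, ∑' i : ℕ, (ball (xc i) (r' i)).indicator (fun _ => (1 : ℝ≥0∞)) p
        ≤ (CD : ℝ≥0∞) * Ω.indicator (fun _ => (1 : ℝ≥0∞)) p := by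
      intro p
      by_cases hp : p ∈ Ω
      · obtain ⟨hfin, hcard⟩ := hoverlap p hp
        have : ∑' i : ℕ, (ball (xc i) (r' i)).indicator (fun _ => (1 : ℝ≥0∞)) p
            = ∑ i ∈ hfin.toFinset, (ball (xc i) (r' i)).indicator (fun _ => (1 : ℝ≥0∞)) p := by
          refine tsum_eq_sum fun i hi => ?_
          have : p ∉ ball (xc i) (r' i) := by
            simpa [Set.Finite.mem_toFinset] using hi
          simp [Set.indicator_of_notMem this]
        rw [this]
        have hle : ∑ i ∈ hfin.toFinset, (ball (xc i) (r' i)).indicator (fun _ => (1 : ℝ≥0∞)) p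
            ≤ ∑ i ∈ hfin.toFinset, 1 :=
          Finset.sum_le_sum fun i _ => Set.indicator_le_self _ _ p
        calc _ ≤ (hfin.toFinset.card : ℝ≥0∞) := by simpa using hle
          _ ≤ (CD : ℝ≥0∞) := by
              have hc : hfin.toFinset.card = {i | p ∈ ball (xc i) (r' i)}.ncard :=
                (Set.ncard_eq_toFinset_card _ hfin).symm
              exact_mod_cast hc ▸ hcard
          _ = (CD : ℝ≥0∞) * Ω.indicator (fun _ => (1 : ℝ≥0∞)) p := by
              simp [Set.indicator_of_mem hp]
      · have : ∀ i : ℕ, (ball (xc i) (r' i)).indicator (fun _ => (1 : ℝ≥0∞)) p = 0 := by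
          intro i
          exact Set.indicator_of_notMem (fun hmem => hp (hB'Ω i hmem)) _
        simp [this, Set.indicator_of_notMem hp]
    calc ∫⁻ p, ∑' i : ℕ, (ball (xc i) (r' i)).indicator (fun _ => (1 : ℝ≥0∞)) p ∂ν
        ≤ ∫⁻ p, (CD : ℝ≥0∞) * Ω.indicator (fun _ => (1 : ℝ≥0∞)) p ∂ν :=
          lintegral_mono h2
      _ = (CD : ℝ≥0∞) * ν Ω := by
          rw [lintegral_const_mul _ (measurable_const.indicator hΩm)]
          congr 1
          exact lintegral_indicator_one hΩm
  -- each term is at most ν(B_i') / b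
  have hterm : ∀ i : {i : ℕ // (2 * CD : ℝ≥0∞) * ν (ball (xc i) (r i)) < ν (ball (xc i) (r' i))},
      ν (U i.1) ≤ ν (ball (xc i.1) (r' i.1)) / b := by
    rintro ⟨i, hi⟩
    have h1 : ν (U i) ≤ ν (ball (xc i) (r i)) := measure_mono (hUB i)
    have h2 : ν (ball (xc i) (r i)) ≤ ν (ball (xc i) (r' i)) / b := by
      rw [ENNReal.le_div_iff_mul_le (Or.inl hb0) (Or.inl hbtop)]
      rw [mul_comm]
      exact hi.le
    exact h1.trans h2
  calc ∑' i : {i : ℕ // (2 * CD : ℝ≥0∞) * ν (ball (xc i) (r i)) < ν (ball (xc i) (r' i))},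
        ν (U i.1)
      ≤ ∑' i : {i : ℕ // (2 * CD : ℝ≥0∞) * ν (ball (xc i) (r i)) < ν (ball (xc i) (r' i))},
        ν (ball (xc i.1) (r' i.1)) / b := ENNReal.tsum_le_tsum hterm
    _ ≤ ∑' i : ℕ, ν (ball (xc i) (r' i)) / b :=
        ENNReal.tsum_comp_le_tsum_of_injective Subtype.val_injective
          (fun i => ν (ball (xc i) (r' i)) / b)
    _ = (∑' i : ℕ, ν (ball (xc i) (r' i))) / b := by
        simp only [div_eq_mul_inv, ENNReal.tsum_mul_right]
    _ ≤ (CD : ℝ≥0∞) * ν Ω / (2 * CD) := ENNReal.div_le_div_right hsum b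
    _ = ν Ω / 2 := by
        rw [mul_comm (2 : ℝ≥0∞) (CD : ℝ≥0∞)]
        exact ENNReal.mul_div_mul_left (ν Ω) 2 hCD0 hCDtop
end
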